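/- arXiv:1402.5712 — 4 statements merged into one kernel-verified Lean document; each statement's English description precedes it below -/
import Mathlib

section
/- Let Z be compact Hausdorff, h : Z → Z a surjective local homeomorphism, and β_c as above. For β > β_c, the series ∑_{n=0}^∞ e^{-βn} |h^{-n}(z)| converges uniformly in z ∈ Z to a continuous function f_β : Z → ℝ. -/
open Filter

/-- The critical inverse temperature `β_c = limsup n⁻¹ ln (max_z |h⁻ⁿ(z)|)`. -/
noncomputable def betaC {Z : Type*} (h : Z → Z) : ℝ :=
  Filter.limsup
    (fun n : ℕ => (n : ℝ)⁻¹ *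
      Real.log (⨆ z : Z, (Nat.card ((h^[n]) ⁻¹' {z}) : ℝ))) Filter.atTop

/-!
A local homeomorphism of a compact Hausdorff space is a covering map, and so are its iterates;
hence `z ↦ |h⁻ⁿ(z)|` is locally constant, in particular continuous and bounded, and
`Mₙ = max_z |h⁻ⁿ(z)|` is submultiplicative. By Fekete's lemma `n⁻¹ log Mₙ` converges, so its limit
is `β_c`, and for `β > β_c` the terms `e^{-βn} Mₙ` are eventually dominated by a geometric series.
The Weierstrass M-test then gives uniform convergence, and the limit is continuous.
-/

open Topology Real

section Covering

variable {E X : Type*} [TopologicalSpace E] [TopologicalSpace X] {f : E → X}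

theorem IsEvenlyCovered.natCard_fiber_eventuallyEq {x : X}
    (hx : IsEvenlyCovered f x (f ⁻¹' {x})) :
    ∀ᶠ y in 𝓝 x, Nat.card (f ⁻¹' {y}) = Nat.card (f ⁻¹' {x}) := by
  obtain ⟨-, U, hxU, hU, -, H, hH⟩ := hx
  filter_upwards [hU.mem_nhds hxU] with y hy
  have hfU (e : f ⁻¹' {y}) : f e ∈ U := by rw [show f e = y from e.2]; exact hy
  refine Nat.card_congr
    { toFun e := (H ⟨e, hfU e⟩).2
      invFun i := ⟨H.symm (⟨y, hy⟩, i), by simp [← hH]⟩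
      left_inv e := ?_
      right_inv i := by simp }
  ext
  have : (H ⟨e, hfU e⟩).1 = ⟨y, hy⟩ := Subtype.ext ((hH _).trans e.2)
  simp [← this]

theorem IsCoveringMap.isLocallyConstant_natCard_fiber (hf : IsCoveringMap f) :
    IsLocallyConstant fun x => Nat.card (f ⁻¹' {x}) :=
  (IsLocallyConstant.iff_eventually_eq _).2 fun x => (hf x).natCard_fiber_eventuallyEq

theorem IsCoveringMap.finite_fiber [CompactSpace E] [T1Space X] (hf : IsCoveringMap f) (x : X) :
    (f ⁻¹' {x}).Finite :=
  have := (hf x).1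
  (isClosed_singleton.preimage hf.continuous).isCompact.finite
    (isDiscrete_iff_discreteTopology.mpr this)

end Covering

theorem IsLocalHomeomorph.iterate {X : Type*} [TopologicalSpace X] {f : X → X}
    (hf : IsLocalHomeomorph f) (n : ℕ) : IsLocalHomeomorph f^[n] := by
  induction n with
  | zero => exact (Homeomorph.refl X).isLocalHomeomorph
  | succ n ih => exact ih.comp hf

theorem natCard_preimage_comp_le {α β γ : Type*} {f : α → β} {g : β → γ} {z : γ} {k : ℝ}
    (hg : (g ⁻¹' {z}).Finite) (hf : ∀ w ∈ g ⁻¹' {z}, (f ⁻¹' {w}).Finite)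
    (hk : ∀ w ∈ g ⁻¹' {z}, (Nat.card (f ⁻¹' {w}) : ℝ) ≤ k) :
    (Nat.card ((g ∘ f) ⁻¹' {z}) : ℝ) ≤ Nat.card (g ⁻¹' {z}) * k := by
  classical
  have hgf : ((g ∘ f) ⁻¹' {z}).Finite := hg.preimage' hf
  calc (Nat.card ((g ∘ f) ⁻¹' {z}) : ℝ)
      = ∑ w ∈ hg.toFinset, ((hgf.toFinset.filter (f · = w)).card : ℝ) := by
        rw [Nat.card_coe_set_eq, Set.ncard_eq_toFinset_card _ hgf,
          Finset.card_eq_sum_card_fiberwise (f := f) (t := hg.toFinset)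
            fun x hx => by simpa using hx]
        push_cast
        rfl
    _ ≤ ∑ _w ∈ hg.toFinset, k := Finset.sum_le_sum fun w hw => by
        rw [Set.Finite.mem_toFinset] at hw
        refine le_trans ?_ (hk w hw)
        rw [Nat.card_coe_set_eq, Set.ncard_eq_toFinset_card _ (hf w hw)]
        exact_mod_cast Finset.card_le_card fun x => by simp_all
    _ = Nat.card (g ⁻¹' {z}) * k := by
        rw [Finset.sum_const, nsmul_eq_mul, Nat.card_coe_set_eq,
          Set.ncard_eq_toFinset_card _ hg]

theorem tendsto_inv_mul_log_of_submultiplicative {a : ℕ → ℝ} (ha : ∀ n, 1 ≤ a n)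
    (hmul : ∀ m n, a (m + n) ≤ a m * a n) :
    ∃ L, Tendsto (fun n : ℕ => (n : ℝ)⁻¹ * log (a n)) atTop (𝓝 L) := by
  have hpos n : 0 < a n := one_pos.trans_le (ha n)
  have hsub : Subadditive fun n => log (a n) := fun m n => by
    rw [← log_mul (hpos m).ne' (hpos n).ne']
    exact log_le_log (hpos _) (hmul m n)
  have hbdd : BddBelow (Set.range fun n => log (a n) / n) :=
    ⟨0, by rintro _ ⟨n, rfl⟩; exact div_nonneg (log_nonneg (ha n)) n.cast_nonneg⟩
  exact ⟨hsub.lim, by simpa only [inv_mul_eq_div] using hsub.tendsto_lim hbdd⟩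

theorem summable_exp_neg_mul_mul_of_tendsto {a : ℕ → ℝ} {L β : ℝ} (ha : ∀ n, 0 < a n)
    (hL : Tendsto (fun n : ℕ => (n : ℝ)⁻¹ * log (a n)) atTop (𝓝 L)) (hLβ : L < β) :
    Summable fun n : ℕ => exp (-β * n) * a n := by
  obtain ⟨γ, hLγ, hγβ⟩ := exists_between hLβ
  refine (summable_geometric_of_lt_one (exp_nonneg _)
    (exp_lt_one_iff.2 (sub_neg.2 hγβ))).of_norm_bounded_eventually_nat ?_
  filter_upwards [hL.eventually (gt_mem_nhds hLγ), eventually_gt_atTop 0] with n hn hn0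
  have han : a n < exp (γ * n) := by
    rw [← log_lt_iff_lt_exp (ha n)]
    rw [inv_mul_lt_iff₀ (Nat.cast_pos.2 hn0)] at hn
    linarith
  calc ‖exp (-β * n) * a n‖ = exp (-β * n) * a n :=
        norm_of_nonneg (mul_nonneg (exp_nonneg _) (ha n).le)
    _ ≤ exp (-β * n) * exp (γ * n) := by gcongr
    _ = exp (γ - β) ^ n := by rw [← exp_add, ← exp_nat_mul]; ring_nf

/-- The quantity inside the logarithm in `betaC`, so `betaC h` is by definition the limsup of
`n⁻¹ * log (maxFiberCard h n)`. -/
noncomputable def maxFiberCard {Z : Type*} (h : Z → Z) (n : ℕ) : ℝ :=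
  ⨆ z : Z, (Nat.card ((h^[n]) ⁻¹' {z}) : ℝ)

section Dynamics

variable {Z : Type*} [TopologicalSpace Z] [CompactSpace Z] [T2Space Z] {h : Z → Z}
variable (hh : IsLocalHomeomorph h)
include hh

theorem IsLocalHomeomorph.isCoveringMap_iterate (n : ℕ) : IsCoveringMap h^[n] :=
  isLocalHomeomorph_iff_isCoveringMap.1 (hh.iterate n)

theorem natCard_fiber_le_maxFiberCard (n : ℕ) (z : Z) :
    (Nat.card ((h^[n]) ⁻¹' {z}) : ℝ) ≤ maxFiberCard h n :=
  le_ciSup ((hh.isCoveringMap_iterate n).isLocallyConstant_natCard_fiber.comp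
    (Nat.cast : ℕ → ℝ)).range_finite.bddAbove z

theorem one_le_maxFiberCard [Nonempty Z] (n : ℕ) : 1 ≤ maxFiberCard h n := by
  obtain ⟨z₀⟩ := ‹Nonempty Z›
  have hfiber : 1 ≤ Nat.card ((h^[n]) ⁻¹' {h^[n] z₀}) :=
    Nat.card_pos_iff.2 ⟨⟨⟨z₀, rfl⟩⟩, ((hh.isCoveringMap_iterate n).finite_fiber _).to_subtype⟩
  exact (Nat.one_le_cast.2 hfiber).trans (natCard_fiber_le_maxFiberCard hh n _)

theorem maxFiberCard_add_le [Nonempty Z] (m n : ℕ) :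
    maxFiberCard h (m + n) ≤ maxFiberCard h m * maxFiberCard h n := by
  refine ciSup_le fun z => ?_
  rw [Function.iterate_add]
  calc _ ≤ (Nat.card ((h^[m]) ⁻¹' {z}) : ℝ) * maxFiberCard h n :=
        natCard_preimage_comp_le ((hh.isCoveringMap_iterate m).finite_fiber z)
          (fun w _ => (hh.isCoveringMap_iterate n).finite_fiber w)
          (fun w _ => natCard_fiber_le_maxFiberCard hh n w)
    _ ≤ maxFiberCard h m * maxFiberCard h n := by
        gcongr
        · exact zero_le_one.trans (one_le_maxFiberCard hh n)
        · exact natCard_fiber_le_maxFiberCard hh m z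

end Dynamics

theorem stmt2_general {Z : Type*} [TopologicalSpace Z] [CompactSpace Z] [T2Space Z]
    (h : Z → Z) (hloc : IsLocalHomeomorph h)
    {β : ℝ} (hβ : betaC h < β) :
    ∃ fβ : C(Z, ℝ),
      TendstoUniformly
        (fun (N : ℕ) (z : Z) =>
          ∑ n ∈ Finset.range N, Real.exp (-β * n) * (Nat.card ((h^[n]) ⁻¹' {z}) : ℝ))
        (⇑fβ) Filter.atTop := by
  rcases isEmpty_or_nonempty Z with _ | _
  · exact ⟨0, fun _ _ => .of_forall fun _ z => isEmptyElim z⟩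
  obtain ⟨L, hL⟩ := tendsto_inv_mul_log_of_submultiplicative (one_le_maxFiberCard hloc)
    (maxFiberCard_add_le hloc)
  have hsum : Summable fun n : ℕ => exp (-β * n) * maxFiberCard h n :=
    summable_exp_neg_mul_mul_of_tendsto (fun n => one_pos.trans_le (one_le_maxFiberCard hloc n))
      hL (hL.limsup_eq ▸ hβ)
  have hterm (n : ℕ) (z : Z) :
      ‖exp (-β * n) * (Nat.card ((h^[n]) ⁻¹' {z}) : ℝ)‖ ≤ exp (-β * n) * maxFiberCard h n := by
    rw [norm_of_nonneg (by positivity)]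
    exact mul_le_mul_of_nonneg_left (natCard_fiber_le_maxFiberCard hloc n z) (exp_nonneg _)
  have hunif := tendstoUniformly_tsum_nat hsum hterm
  have hcont (n : ℕ) : Continuous fun z => (Nat.card ((h^[n]) ⁻¹' {z}) : ℝ) :=
    ((hloc.isCoveringMap_iterate n).isLocallyConstant_natCard_fiber.comp Nat.cast).continuous
  exact ⟨⟨_, hunif.continuous (.of_forall fun N => by fun_prop)⟩, hunif⟩

/-- For `β > β_c`, the series `∑ₙ e^{-βn} |h^{-n}(z)|` converges uniformly in `z`
to a continuous function `f_β`. -/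
theorem stmt2 {Z : Type*} [TopologicalSpace Z] [CompactSpace Z] [T2Space Z] [Nonempty Z]
    (h : Z → Z) (hloc : IsLocalHomeomorph h) (hsurj : Function.Surjective h)
    {β : ℝ} (hβ : betaC h < β) :
    ∃ fβ : C(Z, ℝ),
      TendstoUniformly
        (fun (N : ℕ) (z : Z) =>
          ∑ n ∈ Finset.range N, Real.exp (-β * n) * (Nat.card ((h^[n]) ⁻¹' {z}) : ℝ))
        (⇑fβ) Filter.atTop :=
  stmt2_general h hloc hβ
end

section
/- Let E be a strongly connected finite directed graph with vertex matrix A. Then there is a constant K > 0 such that for all N ∈ ℕ and all vertices w: K · (∑_{v} A^N(v,w)) ≤ ρ(A)^N ≤ max_{u} ∑_{v} A^N(v,u), where ρ(A) is the spectral radius of A. -/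
/-- The vertex matrix of a finite graph: `A v w` is the number of edges from `v` to `w`. -/
noncomputable def vertexMatrix {V E1 : Type*} [Fintype V] [Fintype E1]
    (r s : E1 → V) : Matrix V V ℕ :=
  fun v w => Nat.card {e : E1 // r e = v ∧ s e = w}

/-- The spectral radius of a real matrix. -/
noncomputable def specRad {V : Type*} [Fintype V] [DecidableEq V] (A : Matrix V V ℝ) : ℝ :=
  (spectralRadius ℂ (A.map Complex.ofReal)).toReal

/-!
Since `A` has nonnegative entries, `(A u u)^i ≤ (A^i) u u ≤ ‖A^i‖`, so Gelfand's formula gives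
`A u u ≤ ρ(A)`; applied to `A^N`, together with `ρ(A^N) = ρ(A)^N`, every diagonal entry of `A^N`
is at most `ρ^N`. Strong connectivity provides a walk `w → v` of some length `k`, whence
`A^N(v,w) ≤ A^(N+k)(v,v) ≤ ρ^k ρ^N`; only finitely many `k` occur, which gives the lower bound.
For the upper bound, `ρ(A)^N = ρ((Aᵀ)^N) ≤ ‖(Aᵀ)^N‖` in the row-sum operator norm, and that norm
is the largest column sum of `A^N`.
-/

open scoped ENNReal NNReal Matrix

section GelfandFormula

variable {A : Type*} [NormedRing A] [NormedAlgebra ℂ A] [CompleteSpace A]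

theorem spectrum.spectralRadius_pow [Nontrivial A] (a : A) (n : ℕ) :
    spectralRadius ℂ (a ^ n) = spectralRadius ℂ a ^ n := by
  refine le_antisymm (iSup₂_le fun k hk => ?_) (spectrum.spectralRadius_pow_le' a n)
  obtain ⟨z, hz, rfl⟩ := (spectrum.map_pow a n).subset hk
  rw [nnnorm_pow, ENNReal.coe_pow]
  exact pow_le_pow_left₀ zero_le (le_iSup₂ (f := fun z _ => (‖z‖₊ : ℝ≥0∞)) z hz) n

theorem spectrum.le_spectralRadius_of_forall_pow_le (a : A) {c : ℝ≥0}
    (h : ∀ n : ℕ, c ^ n ≤ ‖a ^ n‖₊) : (c : ℝ≥0∞) ≤ spectralRadius ℂ a := by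
  refine ge_of_tendsto (spectrum.pow_nnnorm_pow_one_div_tendsto_nhds_spectralRadius a) ?_
  filter_upwards [Filter.eventually_ne_atTop 0] with n hn
  calc (c : ℝ≥0∞) = ((c : ℝ≥0∞) ^ n) ^ (n⁻¹ : ℝ) := (ENNReal.pow_rpow_inv_natCast hn _).symm
    _ ≤ (‖a ^ n‖₊ : ℝ≥0∞) ^ (1 / n : ℝ) := by
      rw [one_div]; gcongr; exact_mod_cast h n

theorem spectrum.spectralRadius_ne_top [NormOneClass A] (a : A) : spectralRadius ℂ a ≠ ∞ :=
  ne_top_of_le_ne_top ENNReal.coe_ne_top (spectrum.spectralRadius_le_nnnorm a)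

end GelfandFormula

namespace Matrix

theorem spectrum_transpose {n R : Type*} [Fintype n] [DecidableEq n] [CommRing R]
    (M : Matrix n n R) : spectrum R Mᵀ = spectrum R M := by
  ext μ
  simp only [spectrum.mem_iff, isUnit_iff_isUnit_det]
  rw [← det_transpose (algebraMap R _ μ - M), transpose_sub, algebraMap_eq_diagonal,
    diagonal_transpose]

theorem apply_mul_apply_le_mul_apply {l m n : Type*} [Fintype m] (X : Matrix l m ℕ)
    (Y : Matrix m n ℕ) (i : l) (j : m) (k : n) : X i j * Y j k ≤ (X * Y) i k :=
  Finset.single_le_sum (f := fun j => X i j * Y j k) (fun _ _ => Nat.zero_le _)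
    (Finset.mem_univ j)

section LinftyOpNorm

attribute [local instance] Matrix.linftyOpSeminormedAddCommGroup

theorem nnnorm_apply_le_linfty_opNNNorm {m n α : Type*} [Fintype n] [Fintype m]
    [SeminormedAddCommGroup α] (M : Matrix m n α) (i : m) (j : n) : ‖M i j‖₊ ≤ ‖M‖₊ := by
  rw [linfty_opNNNorm_def]
  exact (Finset.single_le_sum (f := fun j => ‖M i j‖₊) (fun _ _ => zero_le)
    (Finset.mem_univ j)).trans (Finset.le_sup (f := fun i => ∑ j, ‖M i j‖₊) (Finset.mem_univ i))

end LinftyOpNorm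

variable {V : Type*} [Fintype V] [DecidableEq V]

theorem map_natCast_pow {R : Type*} [Semiring R] (A : Matrix V V ℕ) (n : ℕ) :
    (A ^ n).map (Nat.cast : ℕ → R) = A.map Nat.cast ^ n :=
  A.map_pow (Nat.castRingHom R) n

theorem apply_self_pow_le_pow_apply_self (A : Matrix V V ℕ) (u : V) (n : ℕ) :
    A u u ^ n ≤ (A ^ n) u u := by
  induction n with
  | zero => simp
  | succ n ih =>
    calc A u u ^ (n + 1) = A u u ^ n * A u u := pow_succ _ _
      _ ≤ (A ^ n) u u * A u u := Nat.mul_le_mul_right _ ih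
      _ ≤ (A ^ n * A) u u := apply_mul_apply_le_mul_apply _ _ u u u
      _ = (A ^ (n + 1)) u u := by rw [pow_succ]

theorem pow_apply_le_pow_add_apply_self (A : Matrix V V ℕ) {v w : V} {k : ℕ}
    (hk : 0 < (A ^ k) w v) (N : ℕ) : (A ^ N) v w ≤ (A ^ (N + k)) v v :=
  calc (A ^ N) v w ≤ (A ^ N) v w * (A ^ k) w v := Nat.le_mul_of_pos_right _ hk
    _ ≤ (A ^ N * A ^ k) v v := apply_mul_apply_le_mul_apply _ _ v w v
    _ = (A ^ (N + k)) v v := by rw [pow_add]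

end Matrix

section LinftyOpNormedAlgebra

attribute [local instance] Matrix.linftyOpNormedRing Matrix.linftyOpNormedAlgebra

variable {V : Type*} [Fintype V] [DecidableEq V]

theorem Matrix.natCast_apply_self_le_spectralRadius (A : Matrix V V ℕ) (u : V) :
    ((A u u : ℝ≥0) : ℝ≥0∞) ≤ spectralRadius ℂ (A.map (Nat.cast : ℕ → ℂ)) := by
  refine spectrum.le_spectralRadius_of_forall_pow_le _ fun n => ?_
  calc (A u u : ℝ≥0) ^ n = ((A u u ^ n : ℕ) : ℝ≥0) := by push_cast; rfl
    _ ≤ ((A ^ n) u u : ℝ≥0) := by exact_mod_cast apply_self_pow_le_pow_apply_self A u n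
    _ = ‖(A.map (Nat.cast : ℕ → ℂ) ^ n) u u‖₊ := by rw [← map_natCast_pow]; simp
    _ ≤ ‖A.map (Nat.cast : ℕ → ℂ) ^ n‖₊ := nnnorm_apply_le_linfty_opNNNorm _ u u

theorem Matrix.exists_spectralRadius_pow_le_sum [Nonempty V] (A : Matrix V V ℕ) (N : ℕ) :
    ∃ u, spectralRadius ℂ (A.map (Nat.cast : ℕ → ℂ)) ^ N ≤ ∑ v, ((A ^ N) v u : ℝ≥0) := by
  set B := A.map (Nat.cast : ℕ → ℂ)
  obtain ⟨u, -, hu⟩ := Finset.exists_mem_eq_sup Finset.univ Finset.univ_nonempty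
    fun u => ∑ v, ((A ^ N) v u : ℝ≥0)
  refine ⟨u, ?_⟩
  calc spectralRadius ℂ B ^ N = spectralRadius ℂ (Bᵀ ^ N) := by
        rw [spectrum.spectralRadius_pow, spectralRadius, spectralRadius, spectrum_transpose]
    _ ≤ ‖Bᵀ ^ N‖₊ := spectrum.spectralRadius_le_nnnorm _
    _ = ∑ v, ((A ^ N) v u : ℝ≥0) := by
      rw [← transpose_pow, ← map_natCast_pow, linfty_opNNNorm_def, ← hu]
      simp

theorem specRad_map_natCast (A : Matrix V V ℕ) :
    specRad (A.map (Nat.cast : ℕ → ℝ)) =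
      (spectralRadius ℂ (A.map (Nat.cast : ℕ → ℂ))).toReal := by
  rw [specRad, Matrix.map_map]
  congr! 3

theorem pow_apply_self_le_specRad_pow (A : Matrix V V ℕ) (N : ℕ) (u : V) :
    ((A ^ N) u u : ℝ) ≤ specRad (A.map (Nat.cast : ℕ → ℝ)) ^ N := by
  have : Nonempty V := ⟨u⟩
  have h := (A ^ N).natCast_apply_self_le_spectralRadius u
  rw [Matrix.map_natCast_pow, spectrum.spectralRadius_pow] at h
  rw [specRad_map_natCast, ← ENNReal.toReal_pow]
  exact_mod_cast ENNReal.toReal_mono (ENNReal.pow_ne_top (spectrum.spectralRadius_ne_top _)) h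

theorem exists_specRad_pow_le_sum_pow_apply [Nonempty V] (A : Matrix V V ℕ) (N : ℕ) :
    ∃ u, specRad (A.map (Nat.cast : ℕ → ℝ)) ^ N ≤ ∑ v, ((A ^ N) v u : ℝ) := by
  obtain ⟨u, hu⟩ := A.exists_spectralRadius_pow_le_sum N
  refine ⟨u, ?_⟩
  rw [specRad_map_natCast, ← ENNReal.toReal_pow]
  have h := ENNReal.toReal_mono ENNReal.coe_ne_top hu
  rwa [ENNReal.coe_toReal, NNReal.coe_sum] at h

end LinftyOpNormedAlgebra

theorem exists_sum_pow_apply_le_mul_specRad_pow {V : Type*} [Fintype V] [DecidableEq V]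
    (A : Matrix V V ℕ) (hA : ∀ v w, ∃ N, 0 < (A ^ N) v w) :
    ∃ C : ℝ, ∀ N w, ∑ v, ((A ^ N) v w : ℝ) ≤ C * specRad (A.map (Nat.cast : ℕ → ℝ)) ^ N := by
  set ρ := specRad (A.map (Nat.cast : ℕ → ℝ))
  have hρ : 0 ≤ ρ := ENNReal.toReal_nonneg
  choose k hk using hA
  refine ⟨∑ w, ∑ v, ρ ^ k w v, fun N w => ?_⟩
  have hentry (v : V) : ((A ^ N) v w : ℝ) ≤ ρ ^ k w v * ρ ^ N :=
    calc ((A ^ N) v w : ℝ) ≤ ((A ^ (N + k w v)) v v : ℝ) := by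
          exact_mod_cast A.pow_apply_le_pow_add_apply_self (hk w v) N
      _ ≤ ρ ^ (N + k w v) := pow_apply_self_le_specRad_pow A _ v
      _ = ρ ^ k w v * ρ ^ N := by ring
  calc ∑ v, ((A ^ N) v w : ℝ) ≤ (∑ v, ρ ^ k w v) * ρ ^ N := by
        rw [Finset.sum_mul]; exact Finset.sum_le_sum fun v _ => hentry v
    _ ≤ (∑ w, ∑ v, ρ ^ k w v) * ρ ^ N := by
        refine mul_le_mul_of_nonneg_right ?_ (by positivity)
        exact Finset.single_le_sum (f := fun w => ∑ v, ρ ^ k w v)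
          (fun _ _ => by positivity) (Finset.mem_univ w)

/-- For a strongly connected finite directed graph with vertex matrix `A`,
there is `K > 0` with `K ∑_v A^N(v,w) ≤ ρ(A)^N ≤ max_u ∑_v A^N(v,u)`
for all `N` and all vertices `w`. -/
theorem stmt11 {V E1 : Type*} [Fintype V] [Fintype E1] [DecidableEq V] [Nonempty V]
    (r s : E1 → V)
    (hconn : ∀ v w : V, ∃ N : ℕ, 0 < (vertexMatrix r s ^ N) v w) :
    ∃ K > (0 : ℝ), ∀ N : ℕ, ∀ w : V,
      K * (∑ v : V, ((vertexMatrix r s ^ N) v w : ℝ)) ≤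
          specRad ((vertexMatrix r s).map (Nat.cast : ℕ → ℝ)) ^ N ∧
        specRad ((vertexMatrix r s).map (Nat.cast : ℕ → ℝ)) ^ N ≤
          ⨆ u : V, ∑ v : V, ((vertexMatrix r s ^ N) v u : ℝ) := by
  set A := vertexMatrix r s
  set ρ := specRad (A.map (Nat.cast : ℕ → ℝ))
  obtain ⟨C, hC⟩ := exists_sum_pow_apply_le_mul_specRad_pow A hconn
  have hρ : 0 ≤ ρ := ENNReal.toReal_nonneg
  refine ⟨(max C 1)⁻¹, by positivity, fun N w => ⟨?_, ?_⟩⟩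
  · calc (max C 1)⁻¹ * ∑ v, ((A ^ N) v w : ℝ) ≤ (max C 1)⁻¹ * (max C 1 * ρ ^ N) := by
          gcongr
          exact (hC N w).trans (by gcongr; exact le_max_left C 1)
      _ = ρ ^ N := by field_simp
  · obtain ⟨u, hu⟩ := exists_specRad_pow_le_sum_pow_apply A N
    exact hu.trans (le_ciSup (f := fun u => ∑ v, ((A ^ N) v u : ℝ)) (Finite.bddAbove_range _) u)
end

section
/- Let E be a finite directed graph with at least one cycle, A its vertex matrix, and σ the shift on the infinite path space E^∞. Then N⁻¹ ln(max_{z∈E^∞} |σ^{-N}(z)|) → ln ρ(A) as N → ∞; in particular the critical inverse temperature β_c for the shift equals ln ρ(A). -/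
open Finset
open scoped ENNReal NNReal


open Filter

/-- The one-sided infinite path space of a directed graph. -/
def PathSpace {V E1 : Type*} (r s : E1 → V) : Type _ :=
  {z : ℕ → E1 // ∀ i, s (z i) = r (z (i + 1))}

/-- The one-sided shift on the infinite path space. -/
def shiftMap {V E1 : Type*} (r s : E1 → V) (z : PathSpace r s) : PathSpace r s :=
  ⟨fun i => z.1 (i + 1), fun i => z.2 (i + 1)⟩

section aux
variable {V E1 : Type*} [Fintype V] [Fintype E1] [DecidableEq V] (r s : E1 → V)
set_option linter.unusedSectionVars false

lemma shift_iter_apply (N : ℕ) (w : PathSpace r s) (j : ℕ) :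
    ((shiftMap r s)^[N] w).1 j = w.1 (j + N) := by
  induction N generalizing j with
  | zero => rfl
  | succ N ih =>
    rw [Function.iterate_succ_apply']
    have h : j + (N + 1) = (j + 1) + N := by omega
    rw [h, ← ih (j+1)]
    rfl

instance finite_preimage (N : ℕ) (z : PathSpace r s) :
    Finite ((shiftMap r s)^[N] ⁻¹' {z}) := by
  apply Finite.of_injective
    (fun (w : ((shiftMap r s)^[N] ⁻¹' {z})) => (fun i : Fin N => w.1.1 i))
  rintro ⟨w, hw⟩ ⟨w', hw'⟩ h
  simp only [Set.mem_preimage, Set.mem_singleton_iff] at hw hw'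
  apply Subtype.ext
  apply Subtype.ext
  funext i
  rcases lt_or_ge i N with hi | hi
  · exact congrFun h ⟨i, hi⟩
  · have hiN : i = (i - N) + N := by omega
    have h1 : w.1 i = z.1 (i - N) := by
      conv_lhs => rw [hiN]
      rw [← shift_iter_apply r s N w (i - N), hw]
    have h2 : w'.1 i = z.1 (i - N) := by
      conv_lhs => rw [hiN]
      rw [← shift_iter_apply r s N w' (i - N), hw']
    rw [h1, h2]

def consPath (e : E1) (z : PathSpace r s) (he : s e = r (z.1 0)) : PathSpace r s :=
  ⟨fun i => match i with | 0 => e | (k+1) => z.1 k, by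
    intro i
    match i with
    | 0 => exact he
    | (k+1) => exact z.2 k⟩

lemma shift_cons (e : E1) (z : PathSpace r s) (he : s e = r (z.1 0)) :
    shiftMap r s (consPath r s e z he) = z := rfl

lemma edge0_prop (N : ℕ) (z w : PathSpace r s) (hw : (shiftMap r s)^[N+1] w = z) :
    s (((shiftMap r s)^[N] w).1 0) = r (z.1 0) := by
  have h1 := ((shiftMap r s)^[N] w).2 0
  have h2 : ((shiftMap r s)^[N] w).1 1 = z.1 0 := by
    rw [shift_iter_apply, ← congrArg (fun y => y.1 0) hw, shift_iter_apply]
    have hn : (1:ℕ) + N = 0 + (N + 1) := by omega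
    rw [hn]
  rw [h1, h2]

lemma iter_eq_cons (N : ℕ) (z w : PathSpace r s) (hw : (shiftMap r s)^[N+1] w = z)
    (he : s (((shiftMap r s)^[N] w).1 0) = r (z.1 0)) :
    (shiftMap r s)^[N] w = consPath r s (((shiftMap r s)^[N] w).1 0) z he := by
  apply Subtype.ext
  funext i
  match i with
  | 0 => rfl
  | (k+1) =>
    show ((shiftMap r s)^[N] w).1 (k+1) = z.1 k
    rw [shift_iter_apply, ← congrArg (fun y => y.1 k) hw, shift_iter_apply]
    have hn : (k:ℕ) + 1 + N = k + (N + 1) := by omega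
    rw [hn]

lemma stepCard (N : ℕ) (z : PathSpace r s) :
    Nat.card ((shiftMap r s)^[N+1] ⁻¹' {z})
      = Nat.card (Σ e : {e : E1 // s e = r (z.1 0)},
          ((shiftMap r s)^[N] ⁻¹' {consPath r s e.1 z e.2})) := by
  symm
  apply Nat.card_eq_of_bijective
    (fun p => ⟨p.2.1, by
      have h : (shiftMap r s)^[N] p.2.1 = consPath r s p.1.1 z p.1.2 := p.2.2
      show (shiftMap r s)^[N+1] p.2.1 ∈ ({z} : Set (PathSpace r s))
      rw [Function.iterate_succ_apply', h, shift_cons]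
      rfl⟩)
  constructor
  · rintro ⟨⟨e, he⟩, ⟨w, h⟩⟩ ⟨⟨e', he'⟩, ⟨w', h'⟩⟩ hpq
    have hww : w = w' := congrArg Subtype.val hpq
    subst hww
    have h2 : (shiftMap r s)^[N] w = consPath r s e z he := h
    have h2' : (shiftMap r s)^[N] w = consPath r s e' z he' := h'
    have hee : e = e' := by
      have := congrArg (fun y => y.1 0) (h2.symm.trans h2')
      exact this
    subst hee
    rfl
  · rintro ⟨w, hw⟩
    have hw' : (shiftMap r s)^[N+1] w = z := hw
    refine ⟨⟨⟨((shiftMap r s)^[N] w).1 0, edge0_prop r s N z w hw'⟩,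
      ⟨w, iter_eq_cons r s N z w hw' _⟩⟩, rfl⟩


lemma vm_eq (w u : V) : vertexMatrix r s w u
    = (Finset.univ.filter fun e => r e = w ∧ s e = u).card := by
  classical
  rw [vertexMatrix, Nat.card_eq_fintype_card, Fintype.card_subtype]

lemma sum_edges (u : V) (f : V → ℕ) :
    ∑ e ∈ Finset.univ.filter (fun e => s e = u), f (r e)
      = ∑ w, (vertexMatrix r s) w u * f w := by
  classical
  rw [← Finset.sum_fiberwise_of_maps_to (g := r) (t := Finset.univ) (fun e _ => Finset.mem_univ _)]
  refine Finset.sum_congr rfl fun w _ => ?_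
  rw [vm_eq]
  have h1 : ((Finset.univ.filter fun e => s e = u).filter fun e => r e = w)
      = (Finset.univ.filter fun e => r e = w ∧ s e = u) := by
    rw [Finset.filter_filter]
    apply Finset.filter_congr; intro e _; exact and_comm
  rw [h1]
  calc ∑ e ∈ Finset.univ.filter fun e => r e = w ∧ s e = u, f (r e)
      = ∑ _e ∈ Finset.univ.filter fun e => r e = w ∧ s e = u, f w := by
        apply Finset.sum_congr rfl; intro e he
        simp only [Finset.mem_filter] at he; rw [he.2.1]
    _ = _ := by rw [Finset.sum_const, smul_eq_mul, mul_comm]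

lemma count_preimage (N : ℕ) (z : PathSpace r s) :
    Nat.card ((shiftMap r s)^[N] ⁻¹' {z})
      = ∑ v, ((vertexMatrix r s) ^ N) v (r (z.1 0)) := by
  classical
  induction N generalizing z with
  | zero =>
    rw [Function.iterate_zero, Set.preimage_id, pow_zero]
    simp [Matrix.one_apply, Finset.sum_ite_eq']
  | succ N ih =>
    rw [stepCard]
    letI : ∀ (e : {e : E1 // s e = r (z.1 0)}),
        Fintype ((shiftMap r s)^[N] ⁻¹' {consPath r s e.1 z e.2}) :=
      fun e => Fintype.ofFinite _
    rw [Nat.card_eq_fintype_card, Fintype.card_sigma]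
    have hterm : ∀ (e : {e : E1 // s e = r (z.1 0)}),
        Fintype.card ((shiftMap r s)^[N] ⁻¹' {consPath r s e.1 z e.2})
          = ∑ v, ((vertexMatrix r s) ^ N) v (r e.1) := by
      intro e
      rw [← Nat.card_eq_fintype_card, ih (consPath r s e.1 z e.2)]
      rfl
    rw [Finset.sum_congr rfl (fun e _ => hterm e)]
    rw [← Finset.sum_subtype (Finset.univ.filter fun e => s e = r (z.1 0))
      (by intro x; simp) (fun e => ∑ v, ((vertexMatrix r s) ^ N) v (r e))]
    rw [sum_edges r s (r (z.1 0)) (fun w => ∑ v, ((vertexMatrix r s) ^ N) v w)]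
    rw [pow_succ]
    simp_rw [Matrix.mul_apply, Finset.mul_sum]
    rw [Finset.sum_comm]
    apply Finset.sum_congr rfl; intro v _
    apply Finset.sum_congr rfl; intro w _
    ring

lemma rowsum_mul (M P : Matrix V V ℕ) (v : V) :
    ∑ u, (M * P) v u = ∑ w, M v w * ∑ u, P w u := by
  simp_rw [Matrix.mul_apply, Finset.mul_sum]
  rw [Finset.sum_comm]

lemma rowsum_anti (m k : ℕ) (w : V) (h : 0 < ∑ x, ((vertexMatrix r s)^(m+k)) w x) :
    0 < ∑ x, ((vertexMatrix r s)^m) w x := by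
  by_contra h0
  have h0' : ∑ x, ((vertexMatrix r s)^m) w x = 0 := by omega
  have hz : ∀ x, ((vertexMatrix r s)^m) w x = 0 := by
    intro x
    exact (Finset.sum_eq_zero_iff.mp h0') x (Finset.mem_univ x)
  rw [pow_add, rowsum_mul] at h
  have : ∑ x, ((vertexMatrix r s)^m) w x * ∑ u, ((vertexMatrix r s)^k) x u = 0 :=
    Finset.sum_eq_zero (fun x _ => by rw [hz x, zero_mul])
  omega

def Wset : Set V := {w | ∀ m, 0 < ∑ x, ((vertexMatrix r s)^m) w x}

lemma exists_edge_W (w : V) (hw : w ∈ Wset r s) :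
    ∃ e, r e = w ∧ s e ∈ Wset r s := by
  classical
  have h1 : ∀ x : V, ∃ m : ℕ, x ∈ Wset r s ∨ ∑ u, ((vertexMatrix r s)^m) x u = 0 := by
    intro x
    by_cases hx : x ∈ Wset r s
    · exact ⟨0, Or.inl hx⟩
    · have : ∃ m, ¬ 0 < ∑ u, ((vertexMatrix r s)^m) x u := by
        by_contra hc
        push_neg at hc
        exact hx hc
      obtain ⟨m, hm⟩ := this
      exact ⟨m, Or.inr (by omega)⟩
  choose f hf using h1
  have hM : ∀ x, x ∉ Wset r s → ∑ u, ((vertexMatrix r s)^(Finset.univ.sup f)) x u = 0 := by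
    intro x hx
    rcases hf x with hx' | hzero
    · exact absurd hx' hx
    · have hle : f x ≤ Finset.univ.sup f := Finset.le_sup (Finset.mem_univ x)
      have hsplit : Finset.univ.sup f = f x + (Finset.univ.sup f - f x) := by omega
      rw [hsplit, pow_add, rowsum_mul]
      apply Finset.sum_eq_zero
      intro u _
      have : ((vertexMatrix r s)^(f x)) x u = 0 :=
        (Finset.sum_eq_zero_iff.mp hzero) u (Finset.mem_univ u)
      rw [this, zero_mul]
  set M := Finset.univ.sup f with hMdef
  have hpos := hw (1 + M)
  rw [pow_add, pow_one, rowsum_mul] at hpos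
  have hex : ∃ x, 0 < vertexMatrix r s w x * ∑ u, ((vertexMatrix r s)^M) x u := by
    by_contra hc
    push_neg at hc
    have : ∑ x, vertexMatrix r s w x * ∑ u, ((vertexMatrix r s)^M) x u = 0 :=
      Finset.sum_eq_zero (fun x _ => by have := hc x; omega)
    omega
  obtain ⟨x, hx⟩ := hex
  have hxW : x ∈ Wset r s := by
    by_contra hxW
    rw [hM x hxW, mul_zero] at hx
    omega
  have hBwx : 0 < vertexMatrix r s w x := by
    rcases Nat.eq_zero_or_pos (vertexMatrix r s w x) with h | h
    · rw [h, zero_mul] at hx; omega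
    · exact h
  have hne : Nonempty {e : E1 // r e = w ∧ s e = x} := (Nat.card_pos_iff.mp hBwx).1
  obtain ⟨e, he1, he2⟩ := hne
  exact ⟨e, he1, he2 ▸ hxW⟩

lemma exists_path_W (w : V) (hw : w ∈ Wset r s) :
    ∃ z : PathSpace r s, r (z.1 0) = w := by
  have hF : ∀ x : {x // x ∈ Wset r s}, ∃ e : E1, r e = x.1 ∧ s e ∈ Wset r s :=
    fun x => exists_edge_W r s x.1 x.2
  choose F hF1 hF2 using hF
  let vs : ℕ → {x // x ∈ Wset r s} :=
    fun k => Nat.rec ⟨w, hw⟩ (fun _ x => ⟨s (F x), hF2 x⟩) k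
  refine ⟨⟨fun k => F (vs k), fun i => ?_⟩, hF1 _⟩
  exact (hF1 (vs (i+1))).symm

lemma exists_bound : ∃ M : ℕ, ∀ x, x ∉ Wset r s → ∑ u, ((vertexMatrix r s)^M) x u = 0 := by
  classical
  have h1 : ∀ x : V, ∃ m : ℕ, x ∈ Wset r s ∨ ∑ u, ((vertexMatrix r s)^m) x u = 0 := by
    intro x
    by_cases hx : x ∈ Wset r s
    · exact ⟨0, Or.inl hx⟩
    · have : ∃ m, ¬ 0 < ∑ u, ((vertexMatrix r s)^m) x u := by
        by_contra hc
        push_neg at hc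
        exact hx hc
      obtain ⟨m, hm⟩ := this
      exact ⟨m, Or.inr (by omega)⟩
  choose f hf using h1
  refine ⟨Finset.univ.sup f, ?_⟩
  intro x hx
  rcases hf x with hx' | hzero
  · exact absurd hx' hx
  · have hle : f x ≤ Finset.univ.sup f := Finset.le_sup (Finset.mem_univ x)
    have hsplit : Finset.univ.sup f = f x + (Finset.univ.sup f - f x) := by omega
    rw [hsplit, pow_add, rowsum_mul]
    apply Finset.sum_eq_zero
    intro u _
    have : ((vertexMatrix r s)^(f x)) x u = 0 :=
      (Finset.sum_eq_zero_iff.mp hzero) u (Finset.mem_univ u)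
    rw [this, zero_mul]

lemma diag_pow_pos (v : V) (N0 k : ℕ) (h : 0 < ((vertexMatrix r s)^N0) v v) :
    0 < ((vertexMatrix r s)^(k*N0)) v v := by
  induction k with
  | zero => rw [Nat.zero_mul, pow_zero]; simp [Matrix.one_apply]
  | succ k ih =>
    have hsplit : (k+1)*N0 = k*N0 + N0 := by ring
    rw [hsplit, pow_add, Matrix.mul_apply]
    calc (0:ℕ) < ((vertexMatrix r s)^(k*N0)) v v * ((vertexMatrix r s)^N0) v v :=
          Nat.mul_pos ih h
      _ ≤ _ := Finset.single_le_sum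
          (f := fun x => ((vertexMatrix r s)^(k*N0)) v x * ((vertexMatrix r s)^N0) x v)
          (fun x _ => Nat.zero_le _) (Finset.mem_univ v)

lemma cycle_mem_W (v : V) (N0 : ℕ) (hN0 : 1 ≤ N0) (h : 0 < ((vertexMatrix r s)^N0) v v) :
    v ∈ Wset r s := by
  intro m
  have hle : m ≤ m * N0 := Nat.le_mul_of_pos_right m (by omega)
  apply rowsum_anti r s m (m*N0 - m)
  have hsplit : m + (m*N0 - m) = m * N0 := by omega
  rw [hsplit]
  calc (0:ℕ) < ((vertexMatrix r s)^(m*N0)) v v := diag_pow_pos r s v N0 m h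
    _ ≤ _ := Finset.single_le_sum (fun x _ => Nat.zero_le _) (Finset.mem_univ v)

lemma cycle_colsum_pos (v : V) (N0 : ℕ) (hN0 : 1 ≤ N0)
    (h : 0 < ((vertexMatrix r s)^N0) v v) (N : ℕ) :
    0 < ∑ x, ((vertexMatrix r s)^N) x v := by
  have hle : N ≤ N * N0 := Nat.le_mul_of_pos_right N (by omega)
  have hd : 0 < ((vertexMatrix r s)^(N*N0)) v v := diag_pow_pos r s v N0 N h
  have hsplit : N*N0 = (N*N0 - N) + N := by omega
  rw [hsplit, pow_add, Matrix.mul_apply] at hd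
  have hex : ∃ x, 0 < ((vertexMatrix r s)^(N*N0-N)) v x * ((vertexMatrix r s)^N) x v := by
    by_contra hc
    push_neg at hc
    have : ∑ x, ((vertexMatrix r s)^(N*N0-N)) v x * ((vertexMatrix r s)^N) x v = 0 :=
      Finset.sum_eq_zero (fun x _ => by have := hc x; omega)
    omega
  obtain ⟨x, hx⟩ := hex
  have h2 : 0 < ((vertexMatrix r s)^N) x v := by
    rcases Nat.eq_zero_or_pos (((vertexMatrix r s)^N) x v) with h' | h'
    · rw [h', mul_zero] at hx; omega
    · exact h'
  exact lt_of_lt_of_le h2 (Finset.single_le_sum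
    (f := fun y => ((vertexMatrix r s)^N) y v) (fun y _ => Nat.zero_le _) (Finset.mem_univ x))

end aux

/-- For a finite directed graph with at least one cycle,
`N⁻¹ ln (max_z |σ^{-N}(z)|) → ln ρ(A)`; in particular the critical inverse
temperature `β_c` of the shift equals `ln ρ(A)`. -/
theorem stmt13 {V E1 : Type*} [Fintype V] [Fintype E1] [DecidableEq V]
    (r s : E1 → V)
    (hcycle : ∃ v : V, ∃ N : ℕ, 1 ≤ N ∧ 0 < (vertexMatrix r s ^ N) v v) :
    Filter.Tendsto
      (fun N : ℕ => (N : ℝ)⁻¹ *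
        Real.log (⨆ z : PathSpace r s, (Nat.card ((shiftMap r s)^[N] ⁻¹' {z}) : ℝ)))
      Filter.atTop
      (nhds (Real.log (specRad ((vertexMatrix r s).map (Nat.cast : ℕ → ℝ))))) ∧
    Filter.limsup
      (fun N : ℕ => (N : ℝ)⁻¹ *
        Real.log (⨆ z : PathSpace r s, (Nat.card ((shiftMap r s)^[N] ⁻¹' {z}) : ℝ)))
      Filter.atTop
      = Real.log (specRad ((vertexMatrix r s).map (Nat.cast : ℕ → ℝ))) := by
  classical
  obtain ⟨v, N0, hN0, hposd⟩ := hcycle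
  haveI : Nonempty V := ⟨v⟩
  letI : NormedRing (Matrix V V ℂ) := Matrix.linftyOpNormedRing
  letI : NormedAlgebra ℂ (Matrix V V ℂ) := Matrix.linftyOpNormedAlgebra
  let B : Matrix V V ℕ := vertexMatrix r s
  let C : Matrix V V ℂ := ((B.map (Nat.cast : ℕ → ℝ)).map Complex.ofReal)
  -- entries of C ^ N are casts of entries of B ^ N
  have hC : ∀ N : ℕ, C ^ N = (B ^ N).map (fun n : ℕ => (n : ℂ)) := by
    intro N
    have h1 : C = B.map (fun n : ℕ => (n : ℂ)) := by
      ext i j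
      simp [C, Matrix.map_apply]
    have h2 : ((Nat.castRingHom ℂ).mapMatrix : Matrix V V ℕ →+* Matrix V V ℂ) B
        = B.map (fun n : ℕ => (n : ℂ)) := rfl
    rw [h1, ← h2, ← map_pow]
    rfl
  -- the norm of C ^ N is the maximal row sum of B ^ N
  have hnorm : ∀ N : ℕ, ‖C ^ N‖₊
      = Finset.univ.sup (fun i => ((∑ u, (B^N) i u : ℕ) : ℝ≥0)) := by
    intro N
    rw [hC, Matrix.linfty_opNNNorm_def]
    congr 1
    funext i
    rw [Nat.cast_sum]
    apply Finset.sum_congr rfl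
    intro j _
    simp [Matrix.map_apply]
  have hub : ∀ (N : ℕ) (i : V), ((∑ u, (B^N) i u : ℕ) : ℝ) ≤ ‖C^N‖ := by
    intro N i
    have h := Finset.le_sup (f := fun i => ((∑ u, (B^N) i u : ℕ) : ℝ≥0)) (Finset.mem_univ i)
    rw [← hnorm N] at h
    have h2 := NNReal.coe_le_coe.mpr h
    simpa using h2
  have hattain : ∀ N : ℕ, ∃ i : V, ‖C^N‖ = ((∑ u, (B^N) i u : ℕ) : ℝ) := by
    intro N
    obtain ⟨i, -, hi⟩ := Finset.exists_mem_eq_sup Finset.univ Finset.univ_nonempty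
      (fun i => ((∑ u, (B^N) i u : ℕ) : ℝ≥0))
    refine ⟨i, ?_⟩
    have h2 := congrArg (fun x : ℝ≥0 => (x:ℝ)) ((hnorm N).trans hi)
    simpa using h2
  -- path space is nonempty
  have hvW : v ∈ Wset r s := cycle_mem_W r s v N0 hN0 hposd
  haveI hSne : Nonempty (PathSpace r s) := ⟨(exists_path_W r s v hvW).choose⟩
  have hcount : ∀ (N : ℕ) (z : PathSpace r s),
      (Nat.card ((shiftMap r s)^[N] ⁻¹' {z}) : ℝ) = ((∑ x, (B^N) x (r (z.1 0)) : ℕ) : ℝ) :=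
    fun N z => by rw [count_preimage]
  let F : ℕ → ℝ := fun N => ⨆ z : PathSpace r s, (Nat.card ((shiftMap r s)^[N] ⁻¹' {z}) : ℝ)
  have hbdd : ∀ N, BddAbove (Set.range
      fun z : PathSpace r s => (Nat.card ((shiftMap r s)^[N] ⁻¹' {z}) : ℝ)) := by
    intro N
    refine ⟨((∑ i, ∑ u, (B^N) i u : ℕ) : ℝ), ?_⟩
    rintro x ⟨z, rfl⟩
    dsimp only
    rw [hcount]
    have h1 : (∑ x, (B^N) x (r (z.1 0))) ≤ ∑ i, ∑ u, (B^N) i u :=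
      Finset.sum_le_sum (fun i _ => Finset.single_le_sum (f := fun u => (B^N) i u)
        (fun u _ => Nat.zero_le _) (Finset.mem_univ (r (z.1 0))))
    exact_mod_cast h1
  have hcolsup : ∀ (N : ℕ) (w : V), w ∈ Wset r s → ((∑ x, (B^N) x w : ℕ) : ℝ) ≤ F N := by
    intro N w hw
    obtain ⟨z, hz⟩ := exists_path_W r s w hw
    have h1 := le_ciSup (hbdd N) z
    rw [hcount N z, hz] at h1
    exact h1
  have hF1 : ∀ N, (1:ℝ) ≤ F N := by
    intro N
    have h1 : (1:ℝ) ≤ ((∑ x, (B^N) x v : ℕ) : ℝ) := by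
      exact_mod_cast cycle_colsum_pos r s v N0 hN0 hposd N
    exact h1.trans (hcolsup N v hvW)
  have hFpos : ∀ N, (0:ℝ) < F N := fun N => lt_of_lt_of_le zero_lt_one (hF1 N)
  have hFup : ∀ N, F N ≤ (Fintype.card V : ℝ) * ‖C^N‖ := by
    intro N
    apply ciSup_le
    intro z
    rw [hcount]
    calc ((∑ x, (B^N) x (r (z.1 0)) : ℕ) : ℝ) = ∑ x, ((B^N) x (r (z.1 0)) : ℝ) := by push_cast; rfl
      _ ≤ ∑ _x : V, ‖C^N‖ := by
          apply Finset.sum_le_sum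
          intro i _
          refine le_trans ?_ (hub N i)
          have h2 : (B^N) i (r (z.1 0)) ≤ ∑ u, (B^N) i u :=
            Finset.single_le_sum (f := fun u => (B^N) i u)
              (fun u _ => Nat.zero_le _) (Finset.mem_univ (r (z.1 0)))
          exact_mod_cast h2
      _ = (Fintype.card V : ℝ) * ‖C^N‖ := by
          rw [Finset.sum_const, Finset.card_univ, nsmul_eq_mul]
  -- bridge inequality
  obtain ⟨M, hM⟩ := exists_bound r s
  let K : ℕ := ∑ w, ∑ u, (B^M) w u
  have hK1 : 1 ≤ K := by
    have h1 : 0 < ∑ u, (B^M) v u := hvW M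
    have h2 : (∑ u, (B^M) v u) ≤ K :=
      Finset.single_le_sum (f := fun w => ∑ u, (B^M) w u)
        (fun w _ => Nat.zero_le _) (Finset.mem_univ v)
    omega
  have hKpos : (0:ℝ) < (K:ℝ) := by exact_mod_cast hK1
  have hbridge : ∀ N, ‖C^(N+M)‖ ≤ (Fintype.card V : ℝ) * ((K:ℝ) * F N) := by
    intro N
    obtain ⟨i, hi⟩ := hattain (N+M)
    rw [hi]
    calc ((∑ u, (B^(N+M)) i u : ℕ) : ℝ)
        = ∑ w, ((B^N) i w : ℝ) * ((∑ u, (B^M) w u : ℕ) : ℝ) := by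
          rw [pow_add, rowsum_mul]
          push_cast
          rfl
      _ ≤ ∑ _w : V, (K:ℝ) * F N := by
          apply Finset.sum_le_sum
          intro w _
          by_cases hw : w ∈ Wset r s
          · have h1 : ((B^N) i w : ℝ) ≤ F N := by
              refine le_trans ?_ (hcolsup N w hw)
              have h2 : (B^N) i w ≤ ∑ x, (B^N) x w :=
                Finset.single_le_sum (f := fun x => (B^N) x w)
                  (fun x _ => Nat.zero_le _) (Finset.mem_univ i)
              exact_mod_cast h2
            have h3 : ((∑ u, (B^M) w u : ℕ) : ℝ) ≤ (K:ℝ) := by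
              have h4 : (∑ u, (B^M) w u) ≤ K :=
                Finset.single_le_sum (f := fun w => ∑ u, (B^M) w u)
                  (fun w _ => Nat.zero_le _) (Finset.mem_univ w)
              exact_mod_cast h4
            calc ((B^N) i w : ℝ) * ((∑ u, (B^M) w u : ℕ) : ℝ)
                ≤ F N * (K:ℝ) := by
                  apply mul_le_mul h1 h3 (by positivity) (le_of_lt (hFpos N))
              _ = (K:ℝ) * F N := mul_comm _ _
          · rw [hM w hw]
            simp only [Nat.cast_zero, mul_zero]
            exact mul_nonneg (le_of_lt hKpos) (le_of_lt (hFpos N))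
      _ = (Fintype.card V : ℝ) * ((K:ℝ) * F N) := by
          rw [Finset.sum_const, Finset.card_univ, nsmul_eq_mul]
  -- spectral radius facts
  have hgel := spectrum.pow_nnnorm_pow_one_div_tendsto_nhds_spectralRadius C
  have hLtop : spectralRadius ℂ C ≠ ⊤ :=
    ne_top_of_le_ne_top ENNReal.coe_ne_top (spectrum.spectralRadius_le_nnnorm (𝕜 := ℂ) C)
  have hreal : Filter.Tendsto (fun N : ℕ => ‖C^N‖ ^ ((1:ℝ)/N)) Filter.atTop
      (nhds (spectralRadius ℂ C).toReal) := by
    have h1 := (ENNReal.tendsto_toReal hLtop).comp hgel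
    refine h1.congr ?_
    intro N
    simp only [Function.comp_apply]
    rw [← ENNReal.toReal_rpow]
    simp
  have hnorm1 : ∀ N, (1:ℝ) ≤ ‖C^N‖ := by
    intro N
    refine le_trans ?_ (hub N v)
    have h1 : 0 < ∑ u, (B^N) v u := hvW N
    exact_mod_cast h1
  have hnormpos : ∀ N, (0:ℝ) < ‖C^N‖ := fun N => lt_of_lt_of_le zero_lt_one (hnorm1 N)
  have hL1 : (1:ℝ) ≤ (spectralRadius ℂ C).toReal := by
    apply ge_of_tendsto' hreal
    intro N
    exact Real.one_le_rpow (hnorm1 N) (by positivity)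
  have hLpos : (0:ℝ) < (spectralRadius ℂ C).toReal := lt_of_lt_of_le zero_lt_one hL1
  have hlog : Filter.Tendsto (fun N : ℕ => (N:ℝ)⁻¹ * Real.log ‖C^N‖) Filter.atTop
      (nhds (Real.log (spectralRadius ℂ C).toReal)) := by
    have h2 := ((Real.continuousAt_log (ne_of_gt hLpos)).tendsto).comp hreal
    refine h2.congr ?_
    intro N
    simp only [Function.comp_apply]
    rw [Real.log_rpow (hnormpos N), one_div]
  have hpowle : ∀ m : ℕ, 1 ≤ m → (spectralRadius ℂ C).toReal ^ m ≤ ‖C^m‖ := by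
    intro m hm
    obtain ⟨m', rfl⟩ : ∃ m', m = m' + 1 := ⟨m - 1, by omega⟩
    have h1 := spectrum.spectralRadius_le_pow_nnnorm_pow_one_div ℂ C m'
    rw [nnnorm_one] at h1
    simp only [ENNReal.coe_one, ENNReal.one_rpow, mul_one] at h1
    have hmr : (0:ℝ) < ((m' + 1 : ℕ) : ℝ) := by positivity
    have h3 : spectralRadius ℂ C ^ (((m'+1 : ℕ)) : ℝ)
        ≤ ((‖C ^ (m'+1)‖₊ : ℝ≥0∞) ^ (1/(m'+1 : ℝ))) ^ (((m'+1 : ℕ)) : ℝ) :=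
      ENNReal.rpow_le_rpow h1 (le_of_lt hmr)
    rw [← ENNReal.rpow_mul] at h3
    have hcast : (1/(m'+1 : ℝ)) * (((m'+1 : ℕ)) : ℝ) = 1 := by
      push_cast
      field_simp
    rw [hcast, ENNReal.rpow_one, ENNReal.rpow_natCast] at h3
    have h4 := ENNReal.toReal_mono ENNReal.coe_ne_top h3
    rw [ENNReal.toReal_pow, ENNReal.coe_toReal, coe_nnnorm] at h4
    exact h4
  -- squeeze
  set ρ : ℝ := (spectralRadius ℂ C).toReal with hρ
  have hcard1 : (1:ℝ) ≤ (Fintype.card V : ℝ) := by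
    have := Fintype.card_pos (α := V)
    exact_mod_cast this
  have hnk : (0:ℝ) < (Fintype.card V : ℝ) * (K:ℝ) := by positivity
  have hlow : ∀ N : ℕ, 1 ≤ N →
      Real.log ρ - (N:ℝ)⁻¹ * Real.log ((Fintype.card V : ℝ) * (K:ℝ))
        ≤ (N:ℝ)⁻¹ * Real.log (F N) := by
    intro N hN
    have hNpos : (0:ℝ) < (N:ℝ) := by exact_mod_cast hN
    have h1 : ρ ^ (N+M) ≤ ((Fintype.card V : ℝ) * (K:ℝ)) * F N := by
      calc ρ ^ (N+M) ≤ ‖C^(N+M)‖ := hpowle (N+M) (by omega)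
        _ ≤ (Fintype.card V : ℝ) * ((K:ℝ) * F N) := hbridge N
        _ = ((Fintype.card V : ℝ) * (K:ℝ)) * F N := by ring
    have h2 : ρ ^ N ≤ ρ ^ (N+M) := pow_le_pow_right₀ hL1 (by omega)
    have h3 : ρ ^ N / ((Fintype.card V : ℝ) * (K:ℝ)) ≤ F N := by
      rw [div_le_iff₀ hnk]
      calc ρ ^ N ≤ ((Fintype.card V : ℝ) * (K:ℝ)) * F N := h2.trans h1
        _ = F N * ((Fintype.card V : ℝ) * (K:ℝ)) := mul_comm _ _
    have h4 : Real.log (ρ ^ N / ((Fintype.card V : ℝ) * (K:ℝ))) ≤ Real.log (F N) :=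
      Real.log_le_log (by positivity) h3
    rw [Real.log_div (by positivity) (ne_of_gt hnk), Real.log_pow] at h4
    have h5 := mul_le_mul_of_nonneg_left h4 (le_of_lt (inv_pos.mpr hNpos))
    calc Real.log ρ - (N:ℝ)⁻¹ * Real.log ((Fintype.card V : ℝ) * (K:ℝ))
        = (N:ℝ)⁻¹ * ((N:ℝ) * Real.log ρ - Real.log ((Fintype.card V : ℝ) * (K:ℝ))) := by
          field_simp
      _ ≤ (N:ℝ)⁻¹ * Real.log (F N) := h5
  have hup2 : ∀ N : ℕ, 1 ≤ N →
      (N:ℝ)⁻¹ * Real.log (F N)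
        ≤ (N:ℝ)⁻¹ * Real.log (Fintype.card V : ℝ) + (N:ℝ)⁻¹ * Real.log ‖C^N‖ := by
    intro N hN
    have hNpos : (0:ℝ) < (N:ℝ) := by exact_mod_cast hN
    have h1 : Real.log (F N) ≤ Real.log ((Fintype.card V : ℝ) * ‖C^N‖) :=
      Real.log_le_log (hFpos N) (hFup N)
    rw [Real.log_mul (by positivity) (ne_of_gt (hnormpos N))] at h1
    have h2 := mul_le_mul_of_nonneg_left h1 (le_of_lt (inv_pos.mpr hNpos))
    rw [mul_add] at h2
    exact h2
  have hlim_low : Filter.Tendsto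
      (fun N : ℕ => Real.log ρ - (N:ℝ)⁻¹ * Real.log ((Fintype.card V : ℝ) * (K:ℝ)))
      Filter.atTop (nhds (Real.log ρ)) := by
    have h0 : Filter.Tendsto
        (fun N : ℕ => (N:ℝ)⁻¹ * Real.log ((Fintype.card V : ℝ) * (K:ℝ)))
        Filter.atTop (nhds 0) := by
      simpa using tendsto_inv_atTop_nhds_zero_nat.mul_const
        (Real.log ((Fintype.card V : ℝ) * (K:ℝ)))
    simpa using tendsto_const_nhds.sub h0
  have hlim_up : Filter.Tendsto
      (fun N : ℕ => (N:ℝ)⁻¹ * Real.log (Fintype.card V : ℝ) + (N:ℝ)⁻¹ * Real.log ‖C^N‖)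
      Filter.atTop (nhds (Real.log ρ)) := by
    have h0 : Filter.Tendsto (fun N : ℕ => (N:ℝ)⁻¹ * Real.log (Fintype.card V : ℝ))
        Filter.atTop (nhds 0) := by
      simpa using tendsto_inv_atTop_nhds_zero_nat.mul_const (Real.log (Fintype.card V : ℝ))
    simpa using h0.add hlog
  have hmain : Filter.Tendsto (fun N : ℕ => (N:ℝ)⁻¹ * Real.log (F N))
      Filter.atTop (nhds (Real.log ρ)) :=
    tendsto_of_tendsto_of_tendsto_of_le_of_le' hlim_low hlim_up
      (Filter.eventually_atTop.mpr ⟨1, hlow⟩) (Filter.eventually_atTop.mpr ⟨1, hup2⟩)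
  have hspec : Real.log (specRad ((vertexMatrix r s).map (Nat.cast : ℕ → ℝ))) = Real.log ρ := rfl
  rw [hspec]
  exact ⟨hmain, hmain.limsup_eq⟩
end

section
/- Let E be the 'dumbbell' graph with two vertices v, w, m loops at v, n loops at w, and one edge from w to v, with m < n. Then for every N ≥ 1 and z ∈ E^∞: |σ^{-N}(z)| = m^N if r(z) = v and |σ^{-N}(z)| = n^N + ∑_{j=0}^{N-1} n^j m^{N-1-j} if r(z) = w. Consequently β_l := limsup_N N⁻¹ ln(min_z |σ^{-N}(z)|) = ln m and β_c := limsup_N N⁻¹ ln(max_z |σ^{-N}(z)|) = ln n. -/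
open Filter

/-- Edge set of the dumbbell graph: `m` loops at `v`, `n` loops at `w`, and one
edge from `w` to `v`. -/
def DumbE (m n : ℕ) : Type := Fin m ⊕ Fin n ⊕ Unit

/-- Range map of the dumbbell graph (vertex `0` is `v`, vertex `1` is `w`);
the connecting edge goes from `w` to `v`, so its range is `v`. -/
def dumbR (m n : ℕ) : DumbE m n → Fin 2 :=
  Sum.elim (fun _ => 0) (Sum.elim (fun _ => 1) (fun _ => 0))

/-- Source map of the dumbbell graph; the connecting edge has source `w`. -/
def dumbS (m n : ℕ) : DumbE m n → Fin 2 :=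
  Sum.elim (fun _ => 0) (Sum.elim (fun _ => 1) (fun _ => 1))

namespace Stmt15Aux

variable {V E1 : Type*} {r s : E1 → V}

def cons (r s : E1 → V) (e : E1) (z : PathSpace r s) (h : s e = r (z.1 0)) : PathSpace r s :=
  ⟨fun i => match i with | 0 => e | (k+1) => z.1 k,
   fun i => match i with | 0 => h | (k+1) => z.2 k⟩

lemma shift_cons (e : E1) (z : PathSpace r s) (h : s e = r (z.1 0)) :
    shiftMap r s (cons r s e z h) = z := Subtype.ext (funext fun _ => rfl)

lemma cons_zero (e : E1) (z : PathSpace r s) (h : s e = r (z.1 0)) :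
    (cons r s e z h).1 0 = e := rfl

/-- the gluing map from the disjoint union of level-N preimages to the level-(N+1) preimage -/
def glue (N : ℕ) (z : PathSpace r s) :
    (Σ e : {e : E1 // s e = r (z.1 0)},
       ((shiftMap r s)^[N] ⁻¹' {cons r s e.1 z e.2})) →
      ((shiftMap r s)^[N+1] ⁻¹' {z} : Set (PathSpace r s)) :=
  fun p => ⟨p.2.1, by
    have h2 : (shiftMap r s)^[N] p.2.1 = cons r s p.1.1 z p.1.2 := p.2.2
    have : (shiftMap r s)^[N+1] p.2.1 = z := by
      rw [Function.iterate_succ_apply', h2, shift_cons]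
    exact this⟩

lemma glue_bijective (N : ℕ) (z : PathSpace r s) : Function.Bijective (glue N z) := by
  constructor
  · rintro ⟨⟨e, he⟩, ⟨y, hy⟩⟩ ⟨⟨e', he'⟩, ⟨y', hy'⟩⟩ h
    have hyy : y = y' := congrArg Subtype.val h
    subst hyy
    have h1 : cons r s e z he = cons r s e' z he' :=
      (Set.mem_singleton_iff.mp hy).symm.trans (Set.mem_singleton_iff.mp hy')
    have he2 : e = e' := congrArg (fun p => p.1 0) h1
    subst he2
    rfl
  · rintro ⟨y, hy⟩
    have hy' : (shiftMap r s)^[N+1] y = z := hy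
    set Y := (shiftMap r s)^[N] y with hY
    have hz : shiftMap r s Y = z := (Function.iterate_succ_apply' (shiftMap r s) N y) ▸ hy'
    have he : s (Y.1 0) = r (z.1 0) := by
      have h0 : s (Y.1 0) = r (Y.1 1) := Y.2 0
      have h1 : (shiftMap r s Y).1 0 = Y.1 1 := rfl
      rw [h0, ← h1, hz]
    have hmem : (shiftMap r s)^[N] y = cons r s (Y.1 0) z he := by
      apply Subtype.ext; funext i
      cases i with
      | zero => rfl
      | succ k =>
        show Y.1 (k+1) = z.1 k
        rw [← hz]; rfl
    exact ⟨⟨⟨Y.1 0, he⟩, ⟨y, hmem⟩⟩, rfl⟩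

lemma nat_card_sigma {ι : Type*} [Fintype ι] (f : ι → Type*) [∀ i, Finite (f i)] :
    Nat.card (Σ i, f i) = ∑ i, Nat.card (f i) := by
  letI : ∀ i, Fintype (f i) := fun i => Fintype.ofFinite _
  simp [Nat.card_eq_fintype_card, Fintype.card_sigma]

instance (m n : ℕ) : Fintype (DumbE m n) :=
  inferInstanceAs (Fintype (Fin m ⊕ Fin n ⊕ Unit))

instance (m n : ℕ) : DecidableEq (DumbE m n) :=
  inferInstanceAs (DecidableEq (Fin m ⊕ Fin n ⊕ Unit))

def eVfun {m n : ℕ} : (e : DumbE m n) → dumbS m n e = 0 → Fin m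
  | Sum.inl a, _ => a
  | Sum.inr (Sum.inl _), h => absurd h (by simp [dumbS])
  | Sum.inr (Sum.inr _), h => absurd h (by simp [dumbS])

def eV (m n : ℕ) : {e : DumbE m n // dumbS m n e = 0} ≃ Fin m where
  toFun e := eVfun e.1 e.2
  invFun a := ⟨Sum.inl a, rfl⟩
  left_inv := by
    rintro ⟨(a | b | c), h⟩
    · rfl
    · exact absurd h (by simp [dumbS])
    · exact absurd h (by simp [dumbS])
  right_inv a := rfl

def eWfun {m n : ℕ} : (e : DumbE m n) → dumbS m n e = 1 → Fin n ⊕ Unit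
  | Sum.inl _, h => absurd h (by simp [dumbS])
  | Sum.inr x, _ => x

def eW (m n : ℕ) : {e : DumbE m n // dumbS m n e = 1} ≃ (Fin n ⊕ Unit) where
  toFun e := eWfun e.1 e.2
  invFun x := ⟨Sum.inr x, by cases x <;> rfl⟩
  left_inv := by
    rintro ⟨(a | b | c), h⟩
    · exact absurd h (by simp [dumbS])
    · rfl
    · rfl
  right_inv x := by cases x <;> rfl

lemma sum_subV (m n : ℕ) (G : Fin 2 → ℕ) :
    ∑ e : {e : DumbE m n // dumbS m n e = 0}, G (dumbR m n e.1) = m * G 0 := by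
  rw [Fintype.sum_equiv (eV m n) _ (fun _ => G 0)]
  · simp [Finset.sum_const, mul_comm]
  · rintro ⟨(a | b | c), h⟩
    · simp [eV, eVfun, dumbR]
    · exact absurd h (by simp [dumbS])
    · exact absurd h (by simp [dumbS])

lemma sum_subW (m n : ℕ) (G : Fin 2 → ℕ) :
    ∑ e : {e : DumbE m n // dumbS m n e = 1}, G (dumbR m n e.1) = n * G 1 + G 0 := by
  rw [Fintype.sum_equiv (eW m n) _ (Sum.elim (fun _ : Fin n => G 1) (fun _ : Unit => G 0))]
  · rw [Fintype.sum_sum_type]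
    simp [Finset.sum_const, mul_comm]
  · rintro ⟨(a | b | c), h⟩
    · exact absurd h (by simp [dumbS])
    · simp [eW, eWfun, dumbR]
    · simp [eW, eWfun, dumbR]

def gfun (m n N : ℕ) : ℕ := n ^ N + ∑ j ∈ Finset.range N, n ^ j * m ^ (N - 1 - j)

lemma gfun_succ (m n N : ℕ) : gfun m n (N + 1) = n * gfun m n N + m ^ N := by
  unfold gfun
  rw [Finset.sum_range_succ']
  have h1 : ∀ j, n ^ (j+1) * m ^ (N + 1 - 1 - (j+1)) = n * (n ^ j * m ^ (N - 1 - j)) := by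
    intro j
    have : N + 1 - 1 - (j+1) = N - 1 - j := by omega
    rw [this, pow_succ]
    ring
  simp only [h1]
  rw [← Finset.mul_sum]
  have : N + 1 - 1 - 0 = N := by omega
  rw [this, pow_succ]
  ring

def F (m n N : ℕ) (u : Fin 2) : ℕ := if u = 0 then m ^ N else gfun m n N

lemma fin2 (a : Fin 2) : a = 0 ∨ a = 1 := by fin_cases a <;> simp

lemma main (m n : ℕ) : ∀ N (z : PathSpace (dumbR m n) (dumbS m n)),
    Finite ((shiftMap (dumbR m n) (dumbS m n))^[N] ⁻¹' {z} : Set _) ∧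
    Nat.card ((shiftMap (dumbR m n) (dumbS m n))^[N] ⁻¹' {z}) =
      F m n N (dumbR m n (z.1 0)) := by
  intro N
  induction N with
  | zero =>
    intro z
    constructor
    · simp only [Function.iterate_zero, Set.preimage_id]
      exact Set.finite_coe_iff.mpr (Set.finite_singleton z)
    · simp only [Function.iterate_zero, Set.preimage_id]
      have h1 : Nat.card ({z} : Set (PathSpace (dumbR m n) (dumbS m n))) = 1 := by
        simp
      rw [h1]
      unfold F gfun
      split <;> simp
  | succ N ih =>
    intro z
    classical
    haveI hfib : ∀ e : {e : DumbE m n // dumbS m n e = dumbR m n (z.1 0)},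
        Finite ((shiftMap (dumbR m n) (dumbS m n))^[N] ⁻¹'
          {cons (dumbR m n) (dumbS m n) e.1 z e.2} : Set _) := fun e => (ih _).1
    have hbij := glue_bijective (r := dumbR m n) (s := dumbS m n) N z
    have hfin : Finite ((shiftMap (dumbR m n) (dumbS m n))^[N+1] ⁻¹' {z} : Set _) :=
      Finite.of_surjective _ hbij.2
    refine ⟨hfin, ?_⟩
    rw [← Nat.card_eq_of_bijective _ hbij, nat_card_sigma]
    have hterm : ∀ e : {e : DumbE m n // dumbS m n e = dumbR m n (z.1 0)},
        Nat.card ((shiftMap (dumbR m n) (dumbS m n))^[N] ⁻¹'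
          {cons (dumbR m n) (dumbS m n) e.1 z e.2} : Set _) = F m n N (dumbR m n e.1) := by
      intro e
      rw [(ih _).2, cons_zero]
    rw [Finset.sum_congr rfl (fun e _ => hterm e)]
    rcases fin2 (dumbR m n (z.1 0)) with hu | hu
    · rw [hu, sum_subV m n (F m n N)]
      simp [F, pow_succ, mul_comm]
    · rw [hu, sum_subW m n (F m n N)]
      have h0 : F m n N 0 = m ^ N := by simp [F]
      have h1 : F m n N 1 = gfun m n N := by
        simp only [F, if_neg (by decide : ¬(1 : Fin 2) = 0)]
      have h2 : F m n (N+1) 1 = gfun m n (N+1) := by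
        simp only [F, if_neg (by decide : ¬(1 : Fin 2) = 0)]
      rw [h0, h1, h2, gfun_succ]

end Stmt15Aux

open Stmt15Aux in
/-- For the dumbbell graph with `1 ≤ m < n`: `|σ^{-N}(z)| = m^N` if `r(z) = v`,
`|σ^{-N}(z)| = n^N + ∑_{j<N} n^j m^{N-1-j}` if `r(z) = w`; consequently
`β_l = ln m` and `β_c = ln n`. -/
theorem stmt15 (m n : ℕ) (hm : 1 ≤ m) (hmn : m < n) :
    (∀ N : ℕ, 1 ≤ N → ∀ z : PathSpace (dumbR m n) (dumbS m n),
      (dumbR m n (z.1 0) = 0 →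
        Nat.card ((shiftMap (dumbR m n) (dumbS m n))^[N] ⁻¹' {z}) = m ^ N) ∧
      (dumbR m n (z.1 0) = 1 →
        Nat.card ((shiftMap (dumbR m n) (dumbS m n))^[N] ⁻¹' {z}) =
          n ^ N + ∑ j ∈ Finset.range N, n ^ j * m ^ (N - 1 - j))) ∧
    Filter.limsup
      (fun N : ℕ => (N : ℝ)⁻¹ *
        Real.log (⨅ z : PathSpace (dumbR m n) (dumbS m n),
          (Nat.card ((shiftMap (dumbR m n) (dumbS m n))^[N] ⁻¹' {z}) : ℝ)))
      Filter.atTop = Real.log m ∧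
    Filter.limsup
      (fun N : ℕ => (N : ℝ)⁻¹ *
        Real.log (⨆ z : PathSpace (dumbR m n) (dumbS m n),
          (Nat.card ((shiftMap (dumbR m n) (dumbS m n))^[N] ⁻¹' {z}) : ℝ)))
      Filter.atTop = Real.log n := by
  have hn : 0 < n := lt_of_le_of_lt (Nat.zero_le m) hmn
  have hn1 : 1 ≤ n := hn
  -- the two special paths
  set zv : PathSpace (dumbR m n) (dumbS m n) :=
    ⟨fun _ => Sum.inl ⟨0, hm⟩, fun _ => rfl⟩ with hzv
  set zw : PathSpace (dumbR m n) (dumbS m n) :=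
    ⟨fun _ => Sum.inr (Sum.inl ⟨0, hn⟩), fun _ => rfl⟩ with hzw
  have hrv : dumbR m n (zv.1 0) = 0 := rfl
  have hrw : dumbR m n (zw.1 0) = 1 := rfl
  haveI : Nonempty (PathSpace (dumbR m n) (dumbS m n)) := ⟨zv⟩
  have hmain := main m n
  have hF0 : ∀ N, F m n N 0 = m ^ N := fun N => by simp [F]
  have hF1 : ∀ N, F m n N 1 = gfun m n N := fun N => by
    simp only [F, if_neg (by decide : ¬(1 : Fin 2) = 0)]
  have hmg : ∀ N, m ^ N ≤ gfun m n N := fun N =>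
    le_trans (Nat.pow_le_pow_left hmn.le N) (Nat.le_add_right _ _)
  have hgle : ∀ N, gfun m n N ≤ (N + 1) * n ^ N := by
    intro N
    have hb : ∀ j ∈ Finset.range N, n ^ j * m ^ (N - 1 - j) ≤ n ^ N := by
      intro j hj
      have hj' := Finset.mem_range.mp hj
      calc n ^ j * m ^ (N - 1 - j) ≤ n ^ j * n ^ (N - 1 - j) :=
            Nat.mul_le_mul_left _ (Nat.pow_le_pow_left hmn.le _)
        _ = n ^ (j + (N - 1 - j)) := (pow_add n j _).symm
        _ ≤ n ^ N := Nat.pow_le_pow_right hn1 (by omega)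
    have hsum : ∑ j ∈ Finset.range N, n ^ j * m ^ (N - 1 - j) ≤ N * n ^ N := by
      calc ∑ j ∈ Finset.range N, n ^ j * m ^ (N - 1 - j)
          ≤ ∑ _j ∈ Finset.range N, n ^ N := Finset.sum_le_sum hb
        _ = N * n ^ N := by simp [Finset.sum_const, mul_comm]
    unfold gfun
    have : (N + 1) * n ^ N = N * n ^ N + n ^ N := by ring
    omega
  have hgpos : ∀ N, 1 ≤ gfun m n N := fun N =>
    le_trans (Nat.one_le_iff_ne_zero.mpr (pow_ne_zero N (by omega))) (Nat.le_add_right _ _)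
  -- cardinality bounds for all paths
  have hlow : ∀ N (z : PathSpace (dumbR m n) (dumbS m n)),
      m ^ N ≤ Nat.card ((shiftMap (dumbR m n) (dumbS m n))^[N] ⁻¹' {z}) := by
    intro N z
    rw [(hmain N z).2]
    rcases fin2 (dumbR m n (z.1 0)) with hu | hu <;> rw [hu]
    · rw [hF0]
    · rw [hF1]; exact hmg N
  have hhigh : ∀ N (z : PathSpace (dumbR m n) (dumbS m n)),
      Nat.card ((shiftMap (dumbR m n) (dumbS m n))^[N] ⁻¹' {z}) ≤ gfun m n N := by
    intro N z
    rw [(hmain N z).2]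
    rcases fin2 (dumbR m n (z.1 0)) with hu | hu <;> rw [hu]
    · rw [hF0]; exact hmg N
    · rw [hF1]
  have hcardv : ∀ N, Nat.card ((shiftMap (dumbR m n) (dumbS m n))^[N] ⁻¹' {zv}) = m ^ N :=
    fun N => by rw [(hmain N zv).2, hrv, hF0]
  have hcardw : ∀ N, Nat.card ((shiftMap (dumbR m n) (dumbS m n))^[N] ⁻¹' {zw}) = gfun m n N :=
    fun N => by rw [(hmain N zw).2, hrw, hF1]
  -- infimum and supremum
  have hinf : ∀ N, (⨅ z : PathSpace (dumbR m n) (dumbS m n),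
      (Nat.card ((shiftMap (dumbR m n) (dumbS m n))^[N] ⁻¹' {z}) : ℝ)) = ((m ^ N : ℕ) : ℝ) := by
    intro N
    apply le_antisymm
    · have hb : BddBelow (Set.range fun z : PathSpace (dumbR m n) (dumbS m n) =>
          (Nat.card ((shiftMap (dumbR m n) (dumbS m n))^[N] ⁻¹' {z}) : ℝ)) := by
        refine ⟨0, ?_⟩
        rintro x ⟨z, rfl⟩
        positivity
      have := ciInf_le hb zv
      rwa [hcardv N] at this
    · apply le_ciInf
      intro z
      beta_reduce
      exact_mod_cast hlow N z
  have hsup : ∀ N, (⨆ z : PathSpace (dumbR m n) (dumbS m n),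
      (Nat.card ((shiftMap (dumbR m n) (dumbS m n))^[N] ⁻¹' {z}) : ℝ)) = ((gfun m n N : ℕ) : ℝ) := by
    intro N
    apply le_antisymm
    · apply ciSup_le
      intro z
      beta_reduce
      exact_mod_cast hhigh N z
    · have hb : BddAbove (Set.range fun z : PathSpace (dumbR m n) (dumbS m n) =>
          (Nat.card ((shiftMap (dumbR m n) (dumbS m n))^[N] ⁻¹' {z}) : ℝ)) := by
        refine ⟨(gfun m n N : ℝ), ?_⟩
        rintro x ⟨z, rfl⟩
        beta_reduce
        exact_mod_cast hhigh N z
      have := le_ciSup hb zw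
      rwa [hcardw N] at this
  refine ⟨?_, ?_, ?_⟩
  · -- part 1
    intro N _ z
    constructor
    · intro h0
      rw [(hmain N z).2, h0, hF0]
    · intro h1
      rw [(hmain N z).2, h1, hF1]
      rfl
  · -- β_l
    have heq : ∀ᶠ N : ℕ in atTop,
        (N : ℝ)⁻¹ * Real.log (⨅ z : PathSpace (dumbR m n) (dumbS m n),
          (Nat.card ((shiftMap (dumbR m n) (dumbS m n))^[N] ⁻¹' {z}) : ℝ)) = Real.log m := by
      filter_upwards [eventually_ge_atTop 1] with N hN
      have hN0 : (N : ℝ) ≠ 0 := Nat.cast_ne_zero.mpr (by omega)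
      rw [hinf N]
      push_cast
      rw [Real.log_pow, ← mul_assoc, inv_mul_cancel₀ hN0, one_mul]
    rw [Filter.limsup_congr heq]
    exact Filter.limsup_const _
  · -- β_c
    have hz0 : Tendsto (fun N : ℕ => (N : ℝ)⁻¹ * Real.log ((N : ℝ) + 1)) atTop (nhds 0) := by
      have h1 : Tendsto (fun x : ℝ => Real.log x / x) atTop (nhds 0) :=
        Real.isLittleO_log_id_atTop.tendsto_div_nhds_zero
      have h2 : Tendsto (fun N : ℕ => ((N : ℝ) + 1)) atTop atTop :=
        tendsto_atTop_add_const_right _ 1 tendsto_natCast_atTop_atTop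
      have h3 := h1.comp h2
      have h4 : Tendsto (fun N : ℕ => ((N : ℝ) + 1) * (N : ℝ)⁻¹) atTop (nhds 1) := by
        have h4' : Tendsto (fun N : ℕ => 1 + (N : ℝ)⁻¹) atTop (nhds (1 + 0)) :=
          tendsto_const_nhds.add tendsto_inv_atTop_nhds_zero_nat
        rw [add_zero] at h4'
        apply h4'.congr'
        filter_upwards [eventually_ge_atTop 1] with N hN
        have hN0 : (N : ℝ) ≠ 0 := Nat.cast_ne_zero.mpr (by omega)
        field_simp
        try ring
      have h5 := h3.mul h4
      rw [zero_mul] at h5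
      apply h5.congr
      intro N
      have hN1 : ((N : ℝ) + 1) ≠ 0 := by positivity
      simp only [Function.comp]
      field_simp
      try ring
    have ht : Tendsto (fun N : ℕ => (N : ℝ)⁻¹ * Real.log ((gfun m n N : ℕ) : ℝ)) atTop
        (nhds (Real.log n)) := by
      have hub : Tendsto (fun N : ℕ => Real.log n + (N : ℝ)⁻¹ * Real.log ((N : ℝ) + 1)) atTop
          (nhds (Real.log n + 0)) := tendsto_const_nhds.add hz0
      rw [add_zero] at hub
      apply tendsto_of_tendsto_of_tendsto_of_le_of_le' (tendsto_const_nhds) hub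
      · -- lower bound
        filter_upwards [eventually_ge_atTop 1] with N hN
        have hN0 : (N : ℝ) ≠ 0 := Nat.cast_ne_zero.mpr (by omega)
        have hN0' : (0:ℝ) < N := by positivity
        have hle : ((n : ℝ) ^ N) ≤ ((gfun m n N : ℕ) : ℝ) := by
          have : (n : ℕ) ^ N ≤ gfun m n N := Nat.le_add_right _ _
          exact_mod_cast this
        have hpos : (0 : ℝ) < (n : ℝ) ^ N := by positivity
        have hlog : Real.log ((n : ℝ) ^ N) ≤ Real.log ((gfun m n N : ℕ) : ℝ) :=
          Real.log_le_log hpos hle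
        rw [Real.log_pow] at hlog
        calc Real.log n = (N : ℝ)⁻¹ * ((N : ℝ) * Real.log n) := by
              rw [← mul_assoc, inv_mul_cancel₀ hN0, one_mul]
          _ ≤ (N : ℝ)⁻¹ * Real.log ((gfun m n N : ℕ) : ℝ) :=
              mul_le_mul_of_nonneg_left hlog (by positivity)
      · -- upper bound
        filter_upwards [eventually_ge_atTop 1] with N hN
        have hN0 : (N : ℝ) ≠ 0 := Nat.cast_ne_zero.mpr (by omega)
        have hgp : (0 : ℝ) < ((gfun m n N : ℕ) : ℝ) := by
          have := hgpos N
          exact_mod_cast Nat.lt_of_lt_of_le Nat.zero_lt_one this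
        have hle : ((gfun m n N : ℕ) : ℝ) ≤ ((N : ℝ) + 1) * (n : ℝ) ^ N := by
          have := hgle N
          exact_mod_cast this
        have hlog : Real.log ((gfun m n N : ℕ) : ℝ) ≤
            Real.log (((N : ℝ) + 1) * (n : ℝ) ^ N) := Real.log_le_log hgp hle
        have hsplit : Real.log (((N : ℝ) + 1) * (n : ℝ) ^ N) =
            Real.log ((N : ℝ) + 1) + (N : ℝ) * Real.log n := by
          rw [Real.log_mul (by positivity) (by positivity), Real.log_pow]
        rw [hsplit] at hlog
        calc (N : ℝ)⁻¹ * Real.log ((gfun m n N : ℕ) : ℝ)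
            ≤ (N : ℝ)⁻¹ * (Real.log ((N : ℝ) + 1) + (N : ℝ) * Real.log n) :=
              mul_le_mul_of_nonneg_left hlog (by positivity)
          _ = Real.log n + (N : ℝ)⁻¹ * Real.log ((N : ℝ) + 1) := by
              field_simp
              try ring
    have hfun : (fun N : ℕ => (N : ℝ)⁻¹ *
        Real.log (⨆ z : PathSpace (dumbR m n) (dumbS m n),
          (Nat.card ((shiftMap (dumbR m n) (dumbS m n))^[N] ⁻¹' {z}) : ℝ))) =
        fun N : ℕ => (N : ℝ)⁻¹ * Real.log ((gfun m n N : ℕ) : ℝ) := by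
      funext N
      rw [hsup N]
    rw [hfun]
    exact ht.limsup_eq
end
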